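/- For the (15,11) binary Hamming code with generator matrix G, assuming its dual (the (15,4) simplex code) has weight enumerator x¹⁵ + 15x⁷y⁸, the number of singular 11 × 11 column-submatrices of G is 15·C(7,4) = 525, and the number of invertible 11 × 11 column-submatrices is C(15,11) − 525 = 840. -/

import Mathlib

open scoped Classical

/-- Hamming weight of a binary vector. -/
def wt {n : ℕ} (v : Fin n → ZMod 2) : ℕ :=
  (Finset.univ.filter (fun i => v i ≠ 0)).card

/-- The columns of `M` indexed by `S` are linearly independent over `F₂`. -/
def colsIndep {k n : ℕ} (M : Matrix (Fin k) (Fin n) (ZMod 2)) (S : Finset (Fin n)) : Prop :=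
  LinearIndependent (ZMod 2) (fun j : {x // x ∈ S} => fun i => M i j.val)

/-!
A set `S` of columns of `M` is dependent exactly when it contains the support of a nonzero
vector of `ker M`. Over `F₂` the support of `u + v` is the symmetric difference of the supports
of `u` and `v`, so if every nonzero kernel vector has weight `w`, two distinct supports cover
`3w/2` coordinates. When `m < 3w/2` an `m`-set of columns therefore contains at most one
support, and the dependent `m`-sets are counted support by support: each support of size `w`
lies in `C(n - w, m - w)` of them. For the Hamming code this gives `15 · C(7, 3) = 525`.
-/

open Finset Matrix

def supp {n : ℕ} (v : Fin n → ZMod 2) : Finset (Fin n) :=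
  univ.filter (fun i => v i ≠ 0)

theorem card_supp {n : ℕ} (v : Fin n → ZMod 2) : #(supp v) = wt v := rfl

theorem supp_subset_iff {n : ℕ} (v : Fin n → ZMod 2) (S : Finset (Fin n)) :
    supp v ⊆ S ↔ ∀ i ∉ S, v i = 0 := by
  simp only [supp, subset_iff, mem_filter, mem_univ, true_and]
  exact forall_congr' fun i => not_imp_comm

theorem not_colsIndep_iff {k n : ℕ} (M : Matrix (Fin k) (Fin n) (ZMod 2)) (S : Finset (Fin n)) :
    ¬ colsIndep M S ↔ ∃ v : Fin n → ZMod 2, v ≠ 0 ∧ M *ᵥ v = 0 ∧ supp v ⊆ S := by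
  have hcomb (f : Fin n →₀ ZMod 2) :
      Finsupp.linearCombination (ZMod 2) (fun j i => M i j) f = M *ᵥ f := by
    ext i
    simp [Finsupp.linearCombination_apply, Finsupp.sum_fintype, mulVec, dotProduct, mul_comm]
  change ¬ LinearIndepOn (ZMod 2) (fun j i => M i j) (S : Set (Fin n)) ↔ _
  rw [linearDepOn_iff', Finsupp.equivFunOnFinite.exists_congr_left]
  simp only [Finsupp.mem_supported', hcomb, ne_eq, ← Finsupp.coe_eq_zero,
    Finsupp.coe_equivFunOnFinite_symm, supp_subset_iff, mem_coe]
  tauto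

theorem supp_add {n : ℕ} (u v : Fin n → ZMod 2) :
    supp (u + v) = (supp u ∪ supp v) \ (supp u ∩ supp v) := by
  ext i
  simp only [supp, mem_filter, mem_univ, true_and, mem_sdiff, mem_union, mem_inter, Pi.add_apply]
  generalize u i = a, v i = b
  revert a b
  decide

theorem two_mul_card_supp_union {n : ℕ} (u v : Fin n → ZMod 2) :
    2 * #(supp u ∪ supp v) = wt u + wt v + wt (u + v) := by
  have hunion := card_union_add_card_inter (supp u) (supp v)
  have hinter := card_le_card (inter_subset_union (s := supp u) (t := supp v))
  rw [← card_supp, ← card_supp, ← card_supp, supp_add, card_sdiff_of_subset inter_subset_union]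
  omega

theorem card_not_colsIndep_eq {k n m w : ℕ} (M : Matrix (Fin k) (Fin n) (ZMod 2))
    (hw : ∀ v : Fin n → ZMod 2, v ≠ 0 → M *ᵥ v = 0 → wt v = w) (hwm : w ≤ m)
    (hm : 2 * m < 3 * w) :
    #((univ.powersetCard m).filter fun S => ¬ colsIndep M S) =
      #(univ.filter fun v : Fin n → ZMod 2 => v ≠ 0 ∧ M *ᵥ v = 0) * (n - w).choose (m - w) := by
  set K := univ.filter fun v : Fin n → ZMod 2 => v ≠ 0 ∧ M *ᵥ v = 0
  have hK : ∀ v ∈ K, v ≠ 0 ∧ M *ᵥ v = 0 := fun v hv => (mem_filter.mp hv).2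
  have hdep : (univ.powersetCard m).filter (fun S => ¬ colsIndep M S) =
      K.biUnion fun v => (univ.powersetCard m).filter (supp v ⊆ ·) := by
    ext S
    simp only [mem_filter, mem_biUnion, K, mem_univ, true_and, not_colsIndep_iff]
    constructor
    · rintro ⟨hS, v, hv0, hMv, hsub⟩
      exact ⟨v, ⟨hv0, hMv⟩, hS, hsub⟩
    · rintro ⟨v, ⟨hv0, hMv⟩, hS, hsub⟩
      exact ⟨hS, v, hv0, hMv, hsub⟩
  have hdisj : (K : Set (Fin n → ZMod 2)).PairwiseDisjoint
      fun v => (univ.powersetCard m).filter (supp v ⊆ ·) := by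
    intro u hu v hv huv
    refine disjoint_left.mpr fun S hSu hSv => ?_
    simp only [mem_filter, mem_powersetCard_univ] at hSu hSv
    have huv0 : u + v ≠ 0 := fun h => huv <| by
      rw [eq_neg_of_add_eq_zero_left h]
      exact funext fun i => ZMod.neg_eq_self_mod_two (v i)
    have hker : M *ᵥ (u + v) = 0 := by rw [mulVec_add, (hK u hu).2, (hK v hv).2, add_zero]
    have hunion := two_mul_card_supp_union u v
    rw [hw u (hK u hu).1 (hK u hu).2, hw v (hK v hv).1 (hK v hv).2, hw _ huv0 hker] at hunion
    have hcover := card_le_card (union_subset hSu.2 hSv.2)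
    omega
  have hcount :
      ∀ v ∈ K, #((univ.powersetCard m).filter (supp v ⊆ ·)) = (n - w).choose (m - w) := by
    intro v hv
    have hwt : #(supp v) = w := hw v (hK v hv).1 (hK v hv).2
    rw [card_filter_powersetCard_subset _ _ _ (subset_univ _) (hwt ▸ hwm), card_univ,
      Fintype.card_fin, hwt]
  rw [hdep, card_biUnion hdisj, sum_const_nat hcount]

theorem stmt_19_general (G : Matrix (Fin 11) (Fin 15) (ZMod 2))
    (hwt : ∀ v : Fin 15 → ZMod 2, v ≠ 0 → G.mulVec v = 0 → wt v = 8)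
    (hcard : ((Finset.univ : Finset (Fin 15 → ZMod 2)).filter
      (fun v => v ≠ 0 ∧ G.mulVec v = 0)).card = 15) :
    ((Finset.univ.powersetCard 11).filter (fun S => ¬ colsIndep G S)).card = 525 ∧
    ((Finset.univ.powersetCard 11).filter (fun S => colsIndep G S)).card = 840 := by
  have hdep : ((Finset.univ.powersetCard 11).filter (fun S => ¬ colsIndep G S)).card = 525 := by
    rw [card_not_colsIndep_eq G hwt (by norm_num) (by norm_num), hcard]
    rfl
  have htotal := card_filter_add_card_filter_not (s := (univ : Finset (Fin 15)).powersetCard 11)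
    (p := fun S => colsIndep G S)
  rw [hdep, card_powersetCard, card_univ, Fintype.card_fin,
    show Nat.choose 15 11 = 1365 from rfl] at htotal
  exact ⟨hdep, by omega⟩

/-- Let `G` be a full-rank `11 × 15` binary generator matrix of the (15,11)
Hamming code, whose dual (the (15,4) simplex code, `{v : G·v = 0}`) has weight enumerator
`x¹⁵ + 15x⁷y⁸` (all 15 nonzero dual codewords have weight 8). Then `G` has exactly
`15·C(7,4) = 525` singular `11 × 11` column-submatrices and `C(15,11) − 525 = 840`
invertible ones. -/
theorem stmt_19 (G : Matrix (Fin 11) (Fin 15) (ZMod 2)) (hrank : G.rank = 11)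
    (hwt : ∀ v : Fin 15 → ZMod 2, v ≠ 0 → G.mulVec v = 0 → wt v = 8)
    (hcard : ((Finset.univ : Finset (Fin 15 → ZMod 2)).filter
      (fun v => v ≠ 0 ∧ G.mulVec v = 0)).card = 15) :
    ((Finset.univ.powersetCard 11).filter (fun S => ¬ colsIndep G S)).card = 525 ∧
    ((Finset.univ.powersetCard 11).filter (fun S => colsIndep G S)).card = 840 :=
  stmt_19_general G hwt hcard
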